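/- For every natural number n ≥ 2, ∑_{k=1}^{n-1} k·(H_k² - H_k^{(2)}) = C(n,2)·(H_n² - H_n^{(2)}) - (1/4)·n(n-1)(2H_n - 1), where C(n,2) = n(n-1)/2. -/

import Mathlib

/-!
With `f k = H k ^ 2 - H2 k` one has `f (k + 1) = f k + 2 H k / (k + 1)`. Summing `k f k` by parts
against `∑_{j<k} j = C(k, 2)` turns the sum into `C(n, 2) f n - ∑_{k<n} k H k`, and the classical
`∑_{k<n} k H k = C(n, 2) (H n - 1/2)` finishes.
-/

open Finset

noncomputable def H (n : ℕ) : ℝ := ∑ i ∈ Finset.range n, (1 : ℝ) / (i + 1)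

noncomputable def H2 (n : ℕ) : ℝ := ∑ i ∈ Finset.range n, (1 : ℝ) / ((i + 1) ^ 2)

lemma H_succ (n : ℕ) : H (n + 1) = H n + 1 / (n + 1) := by
  simp [H, sum_range_succ]

lemma H2_succ (n : ℕ) : H2 (n + 1) = H2 n + 1 / (n + 1) ^ 2 := by
  simp [H2, sum_range_succ]

lemma H_sq_sub_H2_succ (n : ℕ) :
    H (n + 1) ^ 2 - H2 (n + 1) = H n ^ 2 - H2 n + 2 * H n / (n + 1) := by
  rw [H_succ, H2_succ]
  field_simp
  ring

lemma sum_range_mul_H (n : ℕ) :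
    ∑ k ∈ range n, (k : ℝ) * H k = n * (n - 1) / 4 * (2 * H n - 1) := by
  induction n with
  | zero => simp
  | succ n ih =>
    rw [sum_range_succ, ih, H_succ]
    push_cast
    field_simp
    ring

lemma sum_range_mul_H_sq_sub_H2 (n : ℕ) :
    ∑ k ∈ range n, (k : ℝ) * (H k ^ 2 - H2 k)
      = n * (n - 1) / 2 * (H n ^ 2 - H2 n) - ∑ k ∈ range n, (k : ℝ) * H k := by
  induction n with
  | zero => simp
  | succ n ih =>
    rw [sum_range_succ, ih, sum_range_succ, H_sq_sub_H2_succ]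
    push_cast
    field_simp
    ring

lemma sum_Icc_one_pred_eq_sum_range (n : ℕ) (f : ℕ → ℝ) :
    ∑ k ∈ Icc 1 (n - 1), (k : ℝ) * f k = ∑ k ∈ range n, (k : ℝ) * f k := by
  refine sum_subset (fun k hk => ?_) (fun k hk hk' => ?_)
  · simp only [mem_Icc, mem_range] at hk ⊢
    omega
  · have hk0 : k = 0 := by
      simp only [mem_Icc, mem_range] at hk hk'
      omega
    simp [hk0]

theorem sum_k_harmonic_sq_diff_general (n : ℕ) :
    ∑ k ∈ Finset.Icc 1 (n - 1), (k : ℝ) * (H k ^ 2 - H2 k)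
      = (n.choose 2 : ℝ) * (H n ^ 2 - H2 n) - (1 / 4) * n * (n - 1) * (2 * H n - 1) := by
  rw [sum_Icc_one_pred_eq_sum_range, sum_range_mul_H_sq_sub_H2, sum_range_mul_H,
    Nat.cast_choose_two]
  ring

theorem sum_k_harmonic_sq_diff (n : ℕ) (hn : 2 ≤ n) :
    ∑ k ∈ Finset.Icc 1 (n - 1), (k : ℝ) * (H k ^ 2 - H2 k)
      = (n.choose 2 : ℝ) * (H n ^ 2 - H2 n) - (1 / 4) * n * (n - 1) * (2 * H n - 1) :=
  sum_k_harmonic_sq_diff_general n
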